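/- arXiv:1312.6875 — 2 statements merged into one kernel-verified Lean document; each statement's English description precedes it below -/
import Mathlib

section
/- Let W be a discrete memoryless channel with R_cr < C and let Q ∈ P(𝒳) be such that E_r(R,Q) > 0 for some R > R_∞. Then the second derivative of the Gallager function in ρ is strictly negative: ∂²E_o(ρ,Q)/∂ρ² < 0 for every ρ ≥ 0. -/
/-!
Write `E_o(ρ, Q) = -log ∑_y exp g_y(ρ)` with `g_y(ρ) = (1 + ρ) log ∑_x Q(x) W(y|x)^{1/(1+ρ)}`,
the sum running over the outputs reachable under `Q`. The second derivative of a log-sum-exp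
is the tilted average of the `g_y''` plus the tilted variance of the `g_y'`, and
`g_y''(ρ) = (1 + ρ)⁻³ · Var(log W(y|·))` under the weights `Q(x) W(y|x)^{1/(1+ρ)}`, so
`∂²E_o/∂ρ² ≤ 0`. If `(Q, W)` is not singular, one of these variances is positive. If it is
singular, every `g_y` is affine in `ρ`; should all their slopes agree, `E_o(ρ, Q) = ρ m` is
linear, and then `E_r(R, Q) > 0` forces `R < m`, while the sphere-packing exponent is infinite
below `m`, so `m ≤ R_∞ < R`.
-/

open Real BigOperators
open scoped Classical

namespace RCB

/-- A probability distribution on a finite alphabet. -/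
def IsDist {α : Type*} [Fintype α] (Q : α → ℝ) : Prop :=
  (∀ a, 0 ≤ Q a) ∧ ∑ a, Q a = 1

/-- A discrete memoryless channel, i.e. a stochastic matrix from `X` to `Y`. -/
def IsChannel {X Y : Type*} [Fintype X] [Fintype Y] (W : X → Y → ℝ) : Prop :=
  (∀ x y, 0 ≤ W x y) ∧ ∀ x, ∑ y, W x y = 1

/-- The Gallager function `E_o(ρ, Q)`. -/
noncomputable def Eo {X Y : Type*} [Fintype X] [Fintype Y]
    (W : X → Y → ℝ) (ρ : ℝ) (Q : X → ℝ) : ℝ :=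
  - Real.log (∑ y, (∑ x, Q x * W x y ^ (1 / (1 + ρ))) ^ (1 + ρ))

/-- The random coding exponent `E_r(R, Q)` for input distribution `Q`. -/
noncomputable def ErQ {X Y : Type*} [Fintype X] [Fintype Y]
    (W : X → Y → ℝ) (R : ℝ) (Q : X → ℝ) : ℝ :=
  sSup ((fun ρ => -ρ * R + Eo W ρ Q) '' Set.Icc (0 : ℝ) 1)

/-- The random coding exponent `E_r(R)`. -/
noncomputable def Er {X Y : Type*} [Fintype X] [Fintype Y]
    (W : X → Y → ℝ) (R : ℝ) : ℝ :=
  sSup {v : ℝ | ∃ Q : X → ℝ, IsDist Q ∧ v = ErQ W R Q}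

/-- The mutual information `I(Q; W)` (natural logarithm). -/
noncomputable def MI {X Y : Type*} [Fintype X] [Fintype Y]
    (W : X → Y → ℝ) (Q : X → ℝ) : ℝ :=
  ∑ x, ∑ y, Q x * W x y * Real.log (W x y / ∑ x', Q x' * W x' y)

/-- The capacity `C = max_Q I(Q;W)`. -/
noncomputable def Capacity {X Y : Type*} [Fintype X] [Fintype Y]
    (W : X → Y → ℝ) : ℝ :=
  sSup {v : ℝ | ∃ Q : X → ℝ, IsDist Q ∧ v = MI W Q}

/-- The critical rate of the input distribution `Q`:
`R_cr(Q) = ∂E_o(ρ,Q)/∂ρ |_{ρ=1}`. -/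
noncomputable def RcrQ {X Y : Type*} [Fintype X] [Fintype Y]
    (W : X → Y → ℝ) (Q : X → ℝ) : ℝ :=
  deriv (fun ρ => Eo W ρ Q) 1

/-- The critical rate of the channel: the largest `R` with
`E_r(R) = -R + max_Q E_o(1,Q)`. -/
noncomputable def Rcr {X Y : Type*} [Fintype X] [Fintype Y]
    (W : X → Y → ℝ) : ℝ :=
  sSup {R : ℝ | Er W R = -R + sSup {v : ℝ | ∃ Q : X → ℝ, IsDist Q ∧ v = Eo W 1 Q}}

/-- The rate `R_∞ = inf {R ≥ 0 : E_SP(R) < ∞}` (finiteness of the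
sphere-packing exponent expressed as boundedness of the family of affine maps). -/
noncomputable def Rinf {X Y : Type*} [Fintype X] [Fintype Y]
    (W : X → Y → ℝ) : ℝ :=
  sInf {R : ℝ | 0 ≤ R ∧
    BddAbove {v : ℝ | ∃ (Q : X → ℝ) (ρ : ℝ), IsDist Q ∧ 0 ≤ ρ ∧ v = -ρ * R + Eo W ρ Q}}

/-- The pair `(Q, W)` is singular if `W(y|x) = W(y|z)` whenever
`Q(x)W(y|x)Q(z)W(y|z) > 0`. -/
def Singular {X Y : Type*} (W : X → Y → ℝ) (Q : X → ℝ) : Prop :=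
  ∀ x y z, 0 < Q x * W x y * (Q z * W z y) → W x y = W z y

/-- `ρ^*_R(Q) = -∂E_r(a,Q)/∂a |_{a=R}`. -/
noncomputable def rhoStarQ {X Y : Type*} [Fintype X] [Fintype Y]
    (W : X → Y → ℝ) (Q : X → ℝ) (R : ℝ) : ℝ :=
  - deriv (fun a => ErQ W a Q) R

/-- The number of messages of an `(N, R)` code: `⌈exp (N R)⌉`. -/
noncomputable def nMsgs (N : ℕ) (R : ℝ) : ℕ := ⌈Real.exp (N * R)⌉₊

/-- The `N`-fold memoryless extension of the channel `W`. -/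
noncomputable def Wn {X Y : Type*} (W : X → Y → ℝ) {N : ℕ}
    (c : Fin N → X) (y : Fin N → Y) : ℝ :=
  ∏ n, W (c n) (y n)

/-- The maximal error probability of the code `(f, φ)` over the `N`-fold
memoryless extension of `W`. -/
noncomputable def Pmax {X Y : Type*} [Fintype X] [Fintype Y] {M N : ℕ}
    (W : X → Y → ℝ) (f : Fin M → Fin N → X) (φ : (Fin N → Y) → Fin M) : ℝ :=
  ⨆ m : Fin M, ∑ y : Fin N → Y, Wn W (f m) y * (if φ y ≠ m then (1 : ℝ) else 0)

/-- The ensemble average error probability `P̄_e(Q, N, R)`: the `⌈exp (N R)⌉`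
codewords are drawn i.i.d. from `Q^N` and decoded by maximum-likelihood
decoding, ties counted as errors. -/
noncomputable def Pbar {X Y : Type*} [Fintype X] [Fintype Y]
    (W : X → Y → ℝ) (Q : X → ℝ) (N : ℕ) (R : ℝ) : ℝ :=
  ∑ c : Fin (nMsgs N R) → Fin N → X,
    (∏ m, ∏ n, Q (c m n)) *
      ((nMsgs N R : ℝ)⁻¹ *
        ∑ m, ∑ y : Fin N → Y,
          Wn W (c m) y *
            (if ∃ m', m' ≠ m ∧ Wn W (c m) y ≤ Wn W (c m') y then (1 : ℝ) else 0))

/-- The tilted output distribution `f_ρ`. -/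
noncomputable def fRho {X Y : Type*} [Fintype X] [Fintype Y]
    (W : X → Y → ℝ) (Q : X → ℝ) (ρ : ℝ) (y : Y) : ℝ :=
  (∑ x, Q x * W x y ^ (1 / (1 + ρ))) ^ (1 + ρ) /
    ∑ b, (∑ a, Q a * W a b ^ (1 / (1 + ρ))) ^ (1 + ρ)

/-- The cumulant generating function
`Λ_ρ(λ) = log E_{P_{X,Y}}[exp(λ log (f_ρ(Y)/W(Y|X)))]` with `P_{X,Y} = Q × W`. -/
noncomputable def Lam {X Y : Type*} [Fintype X] [Fintype Y]
    (W : X → Y → ℝ) (Q : X → ℝ) (ρ : ℝ) (t : ℝ) : ℝ :=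
  Real.log (∑ x, ∑ y, Q x * W x y * Real.exp (t * Real.log (fRho W Q ρ y / W x y)))

/-- `P_{X,Y,Z}(S̃_Q)` where `P_{X,Y,Z}(x,y,z) = Q(x)W(y|x)Q(z)` and
`S̃_Q = {(x,y,z) : Q(x)W(y|x)Q(z)W(y|z) > 0}`. -/
noncomputable def PStilde {X Y : Type*} [Fintype X] [Fintype Y]
    (W : X → Y → ℝ) (Q : X → ℝ) : ℝ :=
  ∑ x, ∑ y, ∑ z,
    if 0 < Q x * W x y * (Q z * W z y) then Q x * W x y * Q z else 0

/-- The bivariate cumulant generating function `Λ_{1,ρ}(v)` with respect to the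
conditional distribution `P̃_{X,Y,Z}` of `P_{X,Y,Z}` given `S̃_Q`. -/
noncomputable def Lam1 {X Y : Type*} [Fintype X] [Fintype Y]
    (W : X → Y → ℝ) (Q : X → ℝ) (ρ : ℝ) (v : ℝ × ℝ) : ℝ :=
  Real.log ((∑ x, ∑ y, ∑ z,
    if 0 < Q x * W x y * (Q z * W z y) then
      Q x * W x y * Q z *
        Real.exp (v.1 * Real.log (W x y / fRho W Q ρ y) +
          v.2 * Real.log (W z y / W x y))
    else 0) / PStilde W Q)

/-- The subdifferential of `f : ℝ → ℝ` at `R` (for convex `f`). -/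
def Subderiv (f : ℝ → ℝ) (R : ℝ) : Set ℝ :=
  {g : ℝ | ∀ x, f R + g * (x - R) ≤ f x}

/-- The tilted backward channel `P^ρ_{X|Y}`. -/
noncomputable def PXgY {X Y : Type*} [Fintype X]
    (W : X → Y → ℝ) (Q : X → ℝ) (ρ : ℝ) (x : X) (y : Y) : ℝ :=
  Q x * W x y ^ (1 / (1 + ρ)) / ∑ a, Q a * W a y ^ (1 / (1 + ρ))

/-- The tilted joint distribution `P^ρ_{X,Y}(x,y) = P^ρ_{X|Y}(x|y) P^ρ_Y(y)`. -/
noncomputable def PXY {X Y : Type*} [Fintype X] [Fintype Y]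
    (W : X → Y → ℝ) (Q : X → ℝ) (ρ : ℝ) (x : X) (y : Y) : ℝ :=
  PXgY W Q ρ x y * fRho W Q ρ y

open Filter Topology

section WeightedVariance

variable {ι : Type*} (s : Finset ι) (u v : ι → ℝ)

theorem sum_mul_sum_mul_sq_sub_sq_eq :
    (∑ i ∈ s, u i) * (∑ i ∈ s, u i * v i ^ 2) - (∑ i ∈ s, u i * v i) ^ 2
      = (∑ i ∈ s, ∑ j ∈ s, u i * u j * (v i - v j) ^ 2) / 2 := by
  have expand : ∀ i j, u i * u j * (v i - v j) ^ 2
      = u i * v i ^ 2 * u j + u i * (u j * v j ^ 2) - 2 * (u i * v i) * (u j * v j) := by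
    intros; ring
  simp only [expand, Finset.sum_add_distrib, Finset.sum_sub_distrib, ← Finset.mul_sum,
    ← Finset.sum_mul]
  ring

variable {s u v}

theorem sum_mul_sum_mul_sq_sub_sq_nonneg (hu : ∀ i ∈ s, 0 ≤ u i) :
    0 ≤ (∑ i ∈ s, u i) * (∑ i ∈ s, u i * v i ^ 2) - (∑ i ∈ s, u i * v i) ^ 2 := by
  rw [sum_mul_sum_mul_sq_sub_sq_eq]
  exact div_nonneg (Finset.sum_nonneg fun i hi => Finset.sum_nonneg fun j hj =>
    mul_nonneg (mul_nonneg (hu i hi) (hu j hj)) (sq_nonneg _)) zero_le_two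

theorem sum_mul_sum_mul_sq_sub_sq_pos (hu : ∀ i ∈ s, 0 ≤ u i) {i j : ι} (hi : i ∈ s)
    (hj : j ∈ s) (hui : 0 < u i) (huj : 0 < u j) (hv : v i ≠ v j) :
    0 < (∑ i ∈ s, u i) * (∑ i ∈ s, u i * v i ^ 2) - (∑ i ∈ s, u i * v i) ^ 2 := by
  have hterm : ∀ a ∈ s, ∀ b ∈ s, 0 ≤ u a * u b * (v a - v b) ^ 2 := fun a ha b hb =>
    mul_nonneg (mul_nonneg (hu a ha) (hu b hb)) (sq_nonneg _)
  rw [sum_mul_sum_mul_sq_sub_sq_eq]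
  refine div_pos (Finset.sum_pos' (fun a ha => Finset.sum_nonneg (hterm a ha))
    ⟨i, hi, Finset.sum_pos' (hterm i hi) ⟨j, hj, ?_⟩⟩) two_pos
  have := sub_ne_zero.mpr hv
  positivity

theorem sum_mul_sq_add_mul_sum_sub_sq_pos {p a b : ι → ℝ} (hp : ∀ i ∈ s, 0 < p i)
    (hb : ∀ i ∈ s, 0 ≤ b i)
    (h : (∃ i ∈ s, 0 < b i) ∨ ∃ i ∈ s, ∃ j ∈ s, a i ≠ a j) :
    0 < (∑ i ∈ s, p i * (a i ^ 2 + b i)) * ∑ i ∈ s, p i - (∑ i ∈ s, p i * a i) ^ 2 := by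
  have hp' : ∀ i ∈ s, 0 ≤ p i := fun i hi => (hp i hi).le
  have split :
      (∑ i ∈ s, p i * (a i ^ 2 + b i)) * ∑ i ∈ s, p i - (∑ i ∈ s, p i * a i) ^ 2
      = (∑ i ∈ s, p i * b i) * ∑ i ∈ s, p i
        + ((∑ i ∈ s, p i) * (∑ i ∈ s, p i * a i ^ 2) - (∑ i ∈ s, p i * a i) ^ 2) := by
    simp only [mul_add, Finset.sum_add_distrib]
    ring
  have hb_sum : 0 ≤ ∑ i ∈ s, p i * b i :=
    Finset.sum_nonneg fun i hi => mul_nonneg (hp' i hi) (hb i hi)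
  have hvar := sum_mul_sum_mul_sq_sub_sq_nonneg (v := a) hp'
  rw [split]
  rcases h with ⟨i, hi, hbi⟩ | ⟨i, hi, j, hj, hne⟩
  · have hb_pos : 0 < ∑ i ∈ s, p i * b i := Finset.sum_pos'
      (fun i hi => mul_nonneg (hp' i hi) (hb i hi)) ⟨i, hi, mul_pos (hp i hi) hbi⟩
    have := mul_pos hb_pos (Finset.sum_pos hp ⟨i, hi⟩)
    linarith
  · have := sum_mul_sum_mul_sq_sub_sq_pos hp' hi hj (hp i hi) (hp j hj) hne
    have := mul_nonneg hb_sum (Finset.sum_nonneg hp')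
    linarith

end WeightedVariance

section LogSumExp

variable {ι : Type*} {s : Finset ι} {g g' : ι → ℝ → ℝ} {t : ℝ}

theorem hasDerivAt_log_sum_exp (hs : s.Nonempty) (hg : ∀ i ∈ s, HasDerivAt (g i) (g' i t) t) :
    HasDerivAt (fun τ => log (∑ i ∈ s, exp (g i τ)))
      ((∑ i ∈ s, exp (g i t) * g' i t) / ∑ i ∈ s, exp (g i t)) t :=
  (HasDerivAt.fun_sum fun i hi => (hg i hi).exp).log
    (Finset.sum_pos (fun _ _ => exp_pos _) hs).ne'

theorem hasDerivAt_deriv_log_sum_exp {g'' : ι → ℝ} (hs : s.Nonempty)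
    (hg : ∀ᶠ τ in 𝓝 t, ∀ i ∈ s, HasDerivAt (g i) (g' i τ) τ)
    (hg' : ∀ i ∈ s, HasDerivAt (g' i) (g'' i) t) :
    HasDerivAt (deriv fun τ => log (∑ i ∈ s, exp (g i τ)))
      (((∑ i ∈ s, exp (g i t) * (g' i t ^ 2 + g'' i)) * ∑ i ∈ s, exp (g i t)
          - (∑ i ∈ s, exp (g i t) * g' i t) ^ 2) / (∑ i ∈ s, exp (g i t)) ^ 2) t := by
  have hderiv : (deriv fun τ => log (∑ i ∈ s, exp (g i τ)))
      =ᶠ[𝓝 t] fun τ => (∑ i ∈ s, exp (g i τ) * g' i τ) / ∑ i ∈ s, exp (g i τ) :=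
    hg.mono fun τ hτ => (hasDerivAt_log_sum_exp hs hτ).deriv
  have hgt := hg.self_of_nhds
  have hN : HasDerivAt (fun τ => ∑ i ∈ s, exp (g i τ) * g' i τ)
      (∑ i ∈ s, exp (g i t) * (g' i t ^ 2 + g'' i)) t := by
    refine (HasDerivAt.fun_sum fun i hi => ((hgt i hi).exp).mul (hg' i hi)).congr_deriv ?_
    exact Finset.sum_congr rfl fun i _ => by ring
  have hZ :
      HasDerivAt (fun τ => ∑ i ∈ s, exp (g i τ)) (∑ i ∈ s, exp (g i t) * g' i t) t :=
    HasDerivAt.fun_sum fun i hi => (hgt i hi).exp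
  refine ((hN.div hZ (Finset.sum_pos (fun i _ => exp_pos _) hs).ne').congr_of_eventuallyEq
    hderiv).congr_deriv ?_
  ring

end LogSumExp

section PowMoment

variable {ι : Type*} [Fintype ι] (q w : ι → ℝ)

noncomputable def powMoment (k : ℕ) (s : ℝ) : ℝ :=
  ∑ i, q i * w i ^ s * log (w i) ^ k

/-- For `q = Q` and `w = W(y|·)`, `exp (gallagherLog q w ρ)` is the `y`-term
`(∑ x, Q x * W x y ^ (1 / (1 + ρ))) ^ (1 + ρ)` of the sum inside `Eo`. -/
noncomputable def gallagherLog (ρ : ℝ) : ℝ :=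
  (1 + ρ) * log (powMoment q w 0 (1 / (1 + ρ)))

noncomputable def gallagherLogDeriv (ρ : ℝ) : ℝ :=
  log (powMoment q w 0 (1 / (1 + ρ)))
    - powMoment q w 1 (1 / (1 + ρ)) / ((1 + ρ) * powMoment q w 0 (1 / (1 + ρ)))

noncomputable def gallagherLogDeriv2 (ρ : ℝ) : ℝ :=
  (powMoment q w 0 (1 / (1 + ρ)) * powMoment q w 2 (1 / (1 + ρ))
      - powMoment q w 1 (1 / (1 + ρ)) ^ 2)
    / ((1 + ρ) ^ 3 * powMoment q w 0 (1 / (1 + ρ)) ^ 2)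

variable {q w}

theorem powMoment_zero (s : ℝ) : powMoment q w 0 s = ∑ i, q i * w i ^ s := by
  simp [powMoment]

theorem hasDerivAt_const_rpow_of_nonneg {a s : ℝ} (ha : 0 ≤ a) (hs : 0 < s) :
    HasDerivAt (fun s => a ^ s) (a ^ s * log a) s := by
  rcases ha.eq_or_lt with rfl | ha
  · have hzero : (fun s : ℝ => (0 : ℝ) ^ s) =ᶠ[𝓝 s] fun _ => 0 :=
      (lt_mem_nhds hs).mono fun σ hσ => zero_rpow hσ.ne'
    simpa using (hasDerivAt_const s (0 : ℝ)).congr_of_eventuallyEq hzero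
  · exact (hasStrictDerivAt_const_rpow ha s).hasDerivAt

theorem hasDerivAt_powMoment (hw : ∀ i, 0 ≤ w i) (k : ℕ) {s : ℝ} (hs : 0 < s) :
    HasDerivAt (powMoment q w k) (powMoment q w (k + 1) s) s := by
  unfold powMoment
  refine (HasDerivAt.fun_sum fun i _ =>
    (((hasDerivAt_const_rpow_of_nonneg (hw i) hs).const_mul (q i)).mul_const
      (log (w i) ^ k))).congr_deriv (Finset.sum_congr rfl fun i _ => by ring)

theorem hasDerivAt_powMoment_one_div (hw : ∀ i, 0 ≤ w i) (k : ℕ) {ρ : ℝ} (hρ : -1 < ρ) :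
    HasDerivAt (fun ρ => powMoment q w k (1 / (1 + ρ)))
      (-powMoment q w (k + 1) (1 / (1 + ρ)) / (1 + ρ) ^ 2) ρ := by
  have h1ρ : 0 < 1 + ρ := by linarith
  have hinv : HasDerivAt (fun ρ : ℝ => 1 / (1 + ρ)) (-1 / (1 + ρ) ^ 2) ρ := by
    simpa [one_div] using ((hasDerivAt_id ρ).const_add 1).fun_inv h1ρ.ne'
  refine ((hasDerivAt_powMoment hw k (one_div_pos.mpr h1ρ)).comp ρ hinv).congr_deriv ?_
  ring

theorem powMoment_zero_pos (hq : ∀ i, 0 ≤ q i) (hw : ∀ i, 0 ≤ w i)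
    (h : ∃ i, 0 < q i * w i) (s : ℝ) : 0 < powMoment q w 0 s := by
  obtain ⟨i, hi⟩ := h
  rw [powMoment_zero]
  refine Finset.sum_pos' (fun j _ => mul_nonneg (hq j) (rpow_nonneg (hw j) s))
    ⟨i, Finset.mem_univ i, ?_⟩
  exact mul_pos (pos_of_mul_pos_left hi (hw i)) (rpow_pos_of_pos (pos_of_mul_pos_right hi (hq i)) s)

theorem hasDerivAt_gallagherLog (hq : ∀ i, 0 ≤ q i) (hw : ∀ i, 0 ≤ w i)
    (h : ∃ i, 0 < q i * w i) {ρ : ℝ} (hρ : -1 < ρ) :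
    HasDerivAt (gallagherLog q w) (gallagherLogDeriv q w ρ) ρ := by
  have h1ρ : 0 < 1 + ρ := by linarith
  have hM := powMoment_zero_pos hq hw h (1 / (1 + ρ))
  refine (((hasDerivAt_id' ρ).const_add 1).fun_mul
    ((hasDerivAt_powMoment_one_div hw 0 hρ).log hM.ne')).congr_deriv ?_
  rw [gallagherLogDeriv, zero_add]
  field_simp
  ring

theorem hasDerivAt_gallagherLogDeriv (hq : ∀ i, 0 ≤ q i) (hw : ∀ i, 0 ≤ w i)
    (h : ∃ i, 0 < q i * w i) {ρ : ℝ} (hρ : -1 < ρ) :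
    HasDerivAt (gallagherLogDeriv q w) (gallagherLogDeriv2 q w ρ) ρ := by
  have h1ρ : 0 < 1 + ρ := by linarith
  have hM := powMoment_zero_pos hq hw h (1 / (1 + ρ))
  have hM0 := hasDerivAt_powMoment_one_div (q := q) hw 0 hρ
  have hden := ((hasDerivAt_id' ρ).const_add 1).fun_mul hM0
  refine ((hM0.log hM.ne').sub ((hasDerivAt_powMoment_one_div hw 1 hρ).div hden
    (by positivity))).congr_deriv ?_
  unfold gallagherLogDeriv2
  field_simp
  ring

theorem powMoment_variance_eq (s : ℝ) :
    powMoment q w 0 s * powMoment q w 2 s - powMoment q w 1 s ^ 2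
      = (∑ i, q i * w i ^ s) * (∑ i, q i * w i ^ s * log (w i) ^ 2)
        - (∑ i, q i * w i ^ s * log (w i)) ^ 2 := by
  simp [powMoment]

theorem powMoment_variance_nonneg (hq : ∀ i, 0 ≤ q i) (hw : ∀ i, 0 ≤ w i) (s : ℝ) :
    0 ≤ powMoment q w 0 s * powMoment q w 2 s - powMoment q w 1 s ^ 2 := by
  rw [powMoment_variance_eq]
  exact sum_mul_sum_mul_sq_sub_sq_nonneg fun i _ => mul_nonneg (hq i) (rpow_nonneg (hw i) s)

theorem powMoment_variance_pos (hq : ∀ i, 0 ≤ q i) (hw : ∀ i, 0 ≤ w i) {i j : ι}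
    (hi : 0 < q i * w i) (hj : 0 < q j * w j) (hij : w i ≠ w j) (s : ℝ) :
    0 < powMoment q w 0 s * powMoment q w 2 s - powMoment q w 1 s ^ 2 := by
  have hwi := pos_of_mul_pos_right hi (hq i)
  have hwj := pos_of_mul_pos_right hj (hq j)
  rw [powMoment_variance_eq]
  refine sum_mul_sum_mul_sq_sub_sq_pos (fun i _ => mul_nonneg (hq i) (rpow_nonneg (hw i) s))
    (Finset.mem_univ i) (Finset.mem_univ j)
    (mul_pos (pos_of_mul_pos_left hi (hw i)) (rpow_pos_of_pos hwi s))
    (mul_pos (pos_of_mul_pos_left hj (hw j)) (rpow_pos_of_pos hwj s)) ?_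
  exact fun hlog => hij (log_injOn_pos hwi hwj hlog)

theorem gallagherLogDeriv2_nonneg (hq : ∀ i, 0 ≤ q i) (hw : ∀ i, 0 ≤ w i) {ρ : ℝ}
    (hρ : -1 < ρ) : 0 ≤ gallagherLogDeriv2 q w ρ := by
  have h1ρ : 0 < 1 + ρ := by linarith
  exact div_nonneg (powMoment_variance_nonneg hq hw _) (by positivity)

theorem gallagherLogDeriv2_pos (hq : ∀ i, 0 ≤ q i) (hw : ∀ i, 0 ≤ w i) {i j : ι}
    (hi : 0 < q i * w i) (hj : 0 < q j * w j) (hij : w i ≠ w j) {ρ : ℝ} (hρ : -1 < ρ) :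
    0 < gallagherLogDeriv2 q w ρ := by
  have h1ρ : 0 < 1 + ρ := by linarith
  have hM := powMoment_zero_pos hq hw ⟨i, hi⟩ (1 / (1 + ρ))
  exact div_pos (powMoment_variance_pos hq hw hi hj hij _) (by positivity)

theorem exists_gallagherLog_eq_add_mul (hq : ∀ i, 0 ≤ q i) (hw : ∀ i, 0 ≤ w i)
    (h : ∃ i, 0 < q i * w i) (hc : ∀ i j, 0 < q i * w i → 0 < q j * w j → w i = w j) :
    ∃ k, ∀ ρ, -1 < ρ → gallagherLog q w ρ = gallagherLog q w 0 + ρ * k := by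
  obtain ⟨i₀, hi₀⟩ := h
  set m := ∑ i, if 0 < q i * w i then q i else 0
  have hm : 0 < m := Finset.sum_pos' (fun i _ => by split_ifs <;> simp [hq i])
    ⟨i₀, Finset.mem_univ _, by simpa [hi₀] using pos_of_mul_pos_left hi₀ (hw i₀)⟩
  have hc₀ : 0 < w i₀ := pos_of_mul_pos_right hi₀ (hq i₀)
  have hM : ∀ s, 0 < s → powMoment q w 0 s = m * w i₀ ^ s := by
    intro s hs
    rw [powMoment_zero, Finset.sum_mul]
    refine Finset.sum_congr rfl fun i _ => ?_
    split_ifs with hi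
    · rw [hc i i₀ hi hi₀]
    · rcases mul_eq_zero.mp (le_antisymm (not_lt.mp hi) (mul_nonneg (hq i) (hw i))) with h0 | h0
      · simp [h0]
      · simp [h0, zero_rpow hs.ne']
  have hg : ∀ ρ, -1 < ρ → gallagherLog q w ρ = (1 + ρ) * log m + log (w i₀) := by
    intro ρ hρ
    have h1ρ : 0 < 1 + ρ := by linarith
    rw [gallagherLog, hM _ (one_div_pos.mpr h1ρ), log_mul hm.ne' (rpow_pos_of_pos hc₀ _).ne',
      log_rpow hc₀]
    field_simp
  exact ⟨log m, fun ρ hρ => by rw [hg ρ hρ, hg 0 (by norm_num)]; ring⟩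

theorem gallagherLogDeriv_eq_of_gallagherLog_eq_add_mul (hq : ∀ i, 0 ≤ q i)
    (hw : ∀ i, 0 ≤ w i) (h : ∃ i, 0 < q i * w i) {k : ℝ}
    (hk : ∀ ρ, -1 < ρ → gallagherLog q w ρ = gallagherLog q w 0 + ρ * k) {ρ : ℝ}
    (hρ : -1 < ρ) : gallagherLogDeriv q w ρ = k :=
  (hasDerivAt_gallagherLog hq hw h hρ).unique <|
    ((((hasDerivAt_id' ρ).mul_const k).const_add _).congr_of_eventuallyEq
      (eventually_of_mem (Ioi_mem_nhds hρ) hk)).congr_deriv (one_mul k)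

end PowMoment

section Channel

variable {X Y : Type*} [Fintype X] [Fintype Y] {W : X → Y → ℝ} {Q : X → ℝ}

noncomputable def outputSupport (W : X → Y → ℝ) (Q : X → ℝ) : Finset Y :=
  Finset.univ.filter fun y => ∃ x, 0 < Q x * W x y

theorem mem_outputSupport {y : Y} : y ∈ outputSupport W Q ↔ ∃ x, 0 < Q x * W x y := by
  simp [outputSupport]

theorem IsDist.exists_pos (hQ : IsDist Q) : ∃ x, 0 < Q x := by
  by_contra! h
  have := Finset.sum_nonpos fun x (_ : x ∈ Finset.univ) => h x
  linarith [hQ.2]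

theorem outputSupport_nonempty (hW : IsChannel W) (hQ : IsDist Q) :
    (outputSupport W Q).Nonempty := by
  obtain ⟨x, hx⟩ := hQ.exists_pos
  obtain ⟨y, hy⟩ : ∃ y, 0 < W x y := by
    by_contra! h
    have := Finset.sum_nonpos fun y (_ : y ∈ Finset.univ) => h y
    linarith [hW.2 x]
  exact ⟨y, mem_outputSupport.mpr ⟨x, mul_pos hx hy⟩⟩

theorem Eo_eq_neg_log_sum_exp (hW : IsChannel W) (hQ : IsDist Q) {t : ℝ} (ht : -1 < t) :
    Eo W t Q
      = -log (∑ y ∈ outputSupport W Q, exp (gallagherLog Q (fun x => W x y) t)) := by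
  have h1t : 0 < 1 + t := by linarith
  have hA : ∀ y, ∑ x, Q x * W x y ^ (1 / (1 + t))
      = powMoment Q (fun x => W x y) 0 (1 / (1 + t)) := fun y => (powMoment_zero _).symm
  rw [Eo, ← Finset.sum_subset (Finset.subset_univ (outputSupport W Q))]
  · refine congrArg (fun z => -log z) (Finset.sum_congr rfl fun y hy => ?_)
    rw [hA, gallagherLog, rpow_def_of_pos (powMoment_zero_pos hQ.1 (fun x => hW.1 x y)
      (mem_outputSupport.mp hy) _), mul_comm]
  · intro y _ hy
    have hzero : ∀ x, Q x * W x y ^ (1 / (1 + t)) = 0 := by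
      intro x
      have hx : Q x * W x y = 0 := le_antisymm
        (not_lt.mp fun h => hy (mem_outputSupport.mpr ⟨x, h⟩)) (mul_nonneg (hQ.1 x) (hW.1 x y))
      rcases mul_eq_zero.mp hx with h0 | h0
      · simp [h0]
      · rw [h0, zero_rpow (one_div_pos.mpr h1t).ne', mul_zero]
    rw [Finset.sum_eq_zero fun x _ => hzero x, zero_rpow h1t.ne']

theorem Eo_zero (hW : IsChannel W) (hQ : IsDist Q) : Eo W 0 Q = 0 := by
  have hsum : ∑ y, ∑ x, Q x * W x y = 1 := by
    rw [Finset.sum_comm]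
    simp [← Finset.mul_sum, hW.2, hQ.2]
  simp [Eo, hsum]

theorem deriv_deriv_Eo_neg (hW : IsChannel W) (hQ : IsDist Q) {t : ℝ} (ht : -1 < t)
    (h : (∃ y ∈ outputSupport W Q, 0 < gallagherLogDeriv2 Q (fun x => W x y) t) ∨
      ∃ y ∈ outputSupport W Q, ∃ z ∈ outputSupport W Q,
        gallagherLogDeriv Q (fun x => W x y) t ≠ gallagherLogDeriv Q (fun x => W x z) t) :
    deriv (deriv fun t => Eo W t Q) t < 0 := by
  set S := outputSupport W Q
  set L := fun τ => log (∑ y ∈ S, exp (gallagherLog Q (fun x => W x y) τ))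
  have hq := hQ.1
  have hw : ∀ y x, 0 ≤ W x y := fun y x => hW.1 x y
  have hderiv : (deriv fun τ => Eo W τ Q) =ᶠ[𝓝 t] fun τ => -deriv L τ :=
    eventually_of_mem (Ioi_mem_nhds ht) fun τ hτ => by
      change _ = -deriv L τ
      rw [← deriv.fun_neg]
      exact EventuallyEq.deriv_eq (eventually_of_mem (Ioi_mem_nhds hτ) fun σ hσ =>
        Eo_eq_neg_log_sum_exp hW hQ (Set.mem_Ioi.mp hσ))
  have hL := hasDerivAt_deriv_log_sum_exp (outputSupport_nonempty hW hQ)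
    (eventually_of_mem (Ioi_mem_nhds ht) fun τ hτ y hy =>
      hasDerivAt_gallagherLog hq (hw y) (mem_outputSupport.mp hy) hτ)
    fun y hy => hasDerivAt_gallagherLogDeriv hq (hw y) (mem_outputSupport.mp hy) ht
  rw [(hL.neg.congr_of_eventuallyEq hderiv).deriv, neg_lt_zero]
  refine div_pos (sum_mul_sq_add_mul_sum_sub_sq_pos (fun y _ => exp_pos _)
    (fun y _ => gallagherLogDeriv2_nonneg hq (hw y) ht) h)
    (pow_pos (Finset.sum_pos (fun y _ => exp_pos _) (outputSupport_nonempty hW hQ)) 2)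

theorem exists_pos_gallagherLogDeriv2_of_not_singular (hW : IsChannel W) (hQ : IsDist Q)
    (hs : ¬ Singular W Q) {t : ℝ} (ht : -1 < t) :
    ∃ y ∈ outputSupport W Q, 0 < gallagherLogDeriv2 Q (fun x => W x y) t := by
  simp only [Singular, not_forall] at hs
  obtain ⟨x, y, z, hxz, hne⟩ := hs
  have hx := pos_of_mul_pos_left hxz (mul_nonneg (hQ.1 z) (hW.1 z y))
  have hz := pos_of_mul_pos_right hxz (mul_nonneg (hQ.1 x) (hW.1 x y))
  exact ⟨y, mem_outputSupport.mpr ⟨x, hx⟩,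
    gallagherLogDeriv2_pos hQ.1 (fun x => hW.1 x y) hx hz hne ht⟩

theorem exists_Eo_eq_mul_of_singular (hW : IsChannel W) (hQ : IsDist Q) (hs : Singular W Q)
    {t : ℝ} (ht : -1 < t)
    (hconst : ∀ y ∈ outputSupport W Q, ∀ z ∈ outputSupport W Q,
      gallagherLogDeriv Q (fun x => W x y) t = gallagherLogDeriv Q (fun x => W x z) t) :
    ∃ m, ∀ ρ, -1 < ρ → Eo W ρ Q = ρ * m := by
  set S := outputSupport W Q
  set g := fun y => gallagherLog Q (fun x => W x y)
  have haffine : ∀ y ∈ S, ∃ k, ∀ ρ, -1 < ρ → g y ρ = g y 0 + ρ * k := fun y hy =>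
    exists_gallagherLog_eq_add_mul hQ.1 (fun x => hW.1 x y) (mem_outputSupport.mp hy)
      fun i j hi hj => hs i y j (mul_pos hi hj)
  have hslope : ∀ y ∈ S, ∀ k, (∀ ρ, -1 < ρ → g y ρ = g y 0 + ρ * k) →
      gallagherLogDeriv Q (fun x => W x y) t = k := fun y hy _ hk =>
    gallagherLogDeriv_eq_of_gallagherLog_eq_add_mul hQ.1 (fun x => hW.1 x y)
      (mem_outputSupport.mp hy) hk ht
  obtain ⟨y₀, hy₀⟩ := outputSupport_nonempty hW hQ
  obtain ⟨k₀, hk₀⟩ := haffine y₀ hy₀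
  have hg : ∀ ρ, -1 < ρ → ∀ y ∈ S, g y ρ = g y 0 + ρ * k₀ := by
    intro ρ hρ y hy
    obtain ⟨k, hk⟩ := haffine y hy
    rw [hk ρ hρ, ← hslope y hy k hk, hconst y hy y₀ hy₀, hslope y₀ hy₀ k₀ hk₀]
  have hsum : ∑ y ∈ S, exp (g y 0) = 1 := by
    have h0 := Eo_eq_neg_log_sum_exp hW hQ (t := 0) (by norm_num)
    rw [Eo_zero hW hQ, zero_eq_neg] at h0
    exact eq_one_of_pos_of_log_eq_zero
      (Finset.sum_pos (fun y _ => exp_pos _) (outputSupport_nonempty hW hQ)) h0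
  refine ⟨-k₀, fun ρ hρ => ?_⟩
  have hsumρ : ∑ y ∈ S, exp (g y ρ) = exp (ρ * k₀) := by
    rw [Finset.sum_congr rfl fun y hy => by rw [hg ρ hρ y hy, exp_add], ← Finset.sum_mul, hsum,
      one_mul]
  rw [Eo_eq_neg_log_sum_exp hW hQ hρ]
  change -log (∑ y ∈ S, exp (g y ρ)) = _
  rw [hsumρ, log_exp]
  ring

theorem ErQ_nonpos_of_Eo_eq_mul {m R : ℝ} (hm : ∀ ρ, 0 ≤ ρ → Eo W ρ Q = ρ * m)
    (hR : m ≤ R) : ErQ W R Q ≤ 0 := by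
  refine Real.sSup_le ?_ le_rfl
  rintro v ⟨ρ, hρ, rfl⟩
  change -ρ * R + Eo W ρ Q ≤ 0
  rw [hm ρ hρ.1]
  nlinarith [hρ.1]

theorem Eo_le_mul_log_card (hW : IsChannel W) (hQ : IsDist Q) {ρ : ℝ} (hρ : 0 ≤ ρ) :
    Eo W ρ Q ≤ (1 + ρ) * log (Fintype.card X) := by
  have h1ρ : 0 < 1 + ρ := by linarith
  obtain ⟨x₁, -⟩ := hQ.exists_pos
  obtain ⟨x₀, -, hx₀⟩ :=
    Finset.exists_max_image Finset.univ Q ⟨x₁, Finset.mem_univ x₁⟩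
  have hcard : 1 ≤ Fintype.card X * Q x₀ := by
    rw [← hQ.2, ← nsmul_eq_mul]
    exact Finset.sum_le_card_nsmul _ _ _ fun x _ => hx₀ x (Finset.mem_univ x)
  have hQx₀ : 0 < Q x₀ := pos_of_mul_pos_right (one_pos.trans_le hcard) (Nat.cast_nonneg _)
  have hlow : Q x₀ ^ (1 + ρ) ≤ ∑ y, (∑ x, Q x * W x y ^ (1 / (1 + ρ))) ^ (1 + ρ) := by
    calc Q x₀ ^ (1 + ρ) = ∑ y, (Q x₀ * W x₀ y ^ (1 / (1 + ρ))) ^ (1 + ρ) := by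
          simp only [mul_rpow hQx₀.le (rpow_nonneg (hW.1 x₀ _) _), ← rpow_mul (hW.1 x₀ _),
            one_div_mul_cancel h1ρ.ne', rpow_one, ← Finset.mul_sum, hW.2 x₀, mul_one]
      _ ≤ ∑ y, (∑ x, Q x * W x y ^ (1 / (1 + ρ))) ^ (1 + ρ) :=
          Finset.sum_le_sum fun y _ => rpow_le_rpow
            (mul_nonneg hQx₀.le (rpow_nonneg (hW.1 x₀ y) _))
            (Finset.single_le_sum (fun x _ => mul_nonneg (hQ.1 x) (rpow_nonneg (hW.1 x y) _))
              (Finset.mem_univ x₀)) h1ρ.le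
  have hlog := log_le_log (rpow_pos_of_pos hQx₀ _) hlow
  rw [log_rpow hQx₀] at hlog
  have hlogQ : -log (Fintype.card X) ≤ log (Q x₀) := by
    have hc : (0 : ℝ) < Fintype.card X := pos_of_mul_pos_left (one_pos.trans_le hcard) hQx₀.le
    rw [← log_inv]
    exact log_le_log (inv_pos.mpr hc) ((inv_le_iff_one_le_mul₀' hc).mpr hcard)
  have := mul_le_mul_of_nonneg_left hlogQ h1ρ.le
  rw [Eo]
  linarith

theorem le_Rinf_of_Eo_eq_mul (hW : IsChannel W) (hQ : IsDist Q) {m : ℝ}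
    (hm : ∀ ρ, 0 ≤ ρ → Eo W ρ Q = ρ * m) : m ≤ Rinf W := by
  obtain ⟨x, -⟩ := hQ.exists_pos
  have hL : 0 ≤ log (Fintype.card X) :=
    log_nonneg (Nat.one_le_cast.mpr (Fintype.card_pos_iff.mpr ⟨x⟩))
  refine le_csInf ⟨2 * log (Fintype.card X), by positivity, log (Fintype.card X), ?_⟩ ?_
  · rintro v ⟨Q', ρ, hQ', hρ, rfl⟩
    nlinarith [Eo_le_mul_log_card hW hQ' hρ]
  · rintro R ⟨-, M, hM⟩
    by_contra! hRm
    obtain ⟨n, hn⟩ := exists_nat_gt (M / (m - R))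
    have hbound := hM ⟨Q, n, hQ, n.cast_nonneg, rfl⟩
    rw [hm n n.cast_nonneg] at hbound
    rw [div_lt_iff₀ (sub_pos.mpr hRm)] at hn
    linarith

end Channel

theorem statement10_general {X Y : Type*} [Fintype X] [Fintype Y]
    (W : X → Y → ℝ) (hW : IsChannel W)
    (Q : X → ℝ) (hQ : IsDist Q)
    (hEr : ∃ R : ℝ, Rinf W < R ∧ 0 < ErQ W R Q) :
    ∀ ρ : ℝ, 0 ≤ ρ → deriv (deriv (fun t => Eo W t Q)) ρ < 0 := by
  intro ρ hρ
  have ht : -1 < ρ := by linarith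
  refine deriv_deriv_Eo_neg hW hQ ht ?_
  by_cases hs : Singular W Q
  · right
    by_contra! hconst
    obtain ⟨m, hm⟩ := exists_Eo_eq_mul_of_singular hW hQ hs ht hconst
    have hm' : ∀ τ, 0 ≤ τ → Eo W τ Q = τ * m := fun τ hτ => hm τ (by linarith)
    obtain ⟨R, hR, hER⟩ := hEr
    have hmR : m ≤ R := (le_Rinf_of_Eo_eq_mul hW hQ hm').trans hR.le
    exact hER.not_ge (ErQ_nonpos_of_Eo_eq_mul hm' hmR)
  · exact Or.inl (exists_pos_gallagherLogDeriv2_of_not_singular hW hQ hs ht)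

/-- Strict concavity of the Gallager function: `∂²E_o(ρ,Q)/∂ρ² < 0` for all
`ρ ≥ 0`. -/
theorem statement10 {X Y : Type*} [Fintype X] [Fintype Y] [Nonempty X] [Nonempty Y]
    (W : X → Y → ℝ) (hW : IsChannel W) (hcr : Rcr W < Capacity W)
    (Q : X → ℝ) (hQ : IsDist Q)
    (hEr : ∃ R : ℝ, Rinf W < R ∧ 0 < ErQ W R Q) :
    ∀ ρ : ℝ, 0 ≤ ρ → deriv (deriv (fun t => Eo W t Q)) ρ < 0 :=
  statement10_general W hW Q hQ hEr

end RCB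
end

section
/- Let W be a discrete memoryless channel with R_cr < C, Q ∈ P(𝒳) with E_r(R,Q) > 0 for some R > R_∞, and fix r ∈ (R_cr(Q), I(Q;W)). Put ρ := −∂E_r(a,Q)/∂a|_{a=r} ∈ (0,1) and ṽ := ( (1−ρ)/(1+ρ), 1/(1+ρ) ). Then Λ_{1,ρ}(ṽ) = −log P_{X,Y,Z}(S̃_Q) + 2·Λ_ρ(ρ/(1+ρ)). -/
open Real BigOperators
open scoped Classical

namespace RCB

/-!
With `s = 1/(1+ρ)`, `g(y) = ∑ₓ Q(x) W(y|x)^s` and `G = ∑_y g(y)^(1+ρ)` one has `f_ρ = g^(1+ρ)/G`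
(so `E_o(ρ,Q) = -log G`). On the support every exponential in `Λ_ρ` and `Λ_{1,ρ}` is a product of
powers of `W(y|x)`, `W(y|z)` and `f_ρ(y)`; summing out `x` (and `z`) produces factors `g(y)`, and
the remaining sum over `y` is a power of `G`. This gives `Λ_ρ(ρ/(1+ρ)) = s log G` and
`Λ_{1,ρ}(ṽ) = 2s log G - log P(S̃_Q)` for every `ρ > -1`. Finally `ρ = -∂E_r(a,Q)/∂a ≥ 0`
because `E_r(·,Q)` is nonincreasing.
-/

lemma mul_exp_mul_log_div {w c t : ℝ} (hw : 0 < w) (hc : 0 < c) :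
    w * exp (t * log (c / w)) = w ^ (1 - t) * c ^ t := by
  rw [mul_comm t, ← rpow_def_of_pos (div_pos hc hw), div_rpow hc.le hw.le, rpow_sub hw, rpow_one]
  field_simp

lemma mul_exp_add_mul_log_div {a b c u s : ℝ} (ha : 0 < a) (hb : 0 < b) (hc : 0 < c) :
    a * exp (u * log (a / c) + s * log (b / a)) = a ^ (1 + u - s) * b ^ s / c ^ u := by
  rw [exp_add, mul_comm u, mul_comm s, ← rpow_def_of_pos (div_pos ha hc),
    ← rpow_def_of_pos (div_pos hb ha), div_rpow ha.le hc.le, div_rpow hb.le ha.le,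
    rpow_sub ha, rpow_add ha, rpow_one]
  field_simp

section Tilting

variable {X Y : Type*} [Fintype X] [Fintype Y] {W : X → Y → ℝ} {Q : X → ℝ}

lemma IsDist.exists_pos_s15 {α : Type*} [Fintype α] {P : α → ℝ} (hP : IsDist P) : ∃ a, 0 < P a := by
  obtain ⟨a, -, ha⟩ := Finset.exists_lt_of_sum_lt (s := Finset.univ) (f := 0) (g := P)
    (by simp [hP.2])
  exact ⟨a, ha⟩

lemma IsChannel.isDist (hW : IsChannel W) (x : X) : IsDist (W x) := ⟨hW.1 x, hW.2 x⟩

variable (W Q) in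
noncomputable def tiltedOutput (s : ℝ) (y : Y) : ℝ :=
  ∑ x, Q x * W x y ^ s

variable (W Q) in
noncomputable def gallagerSum (ρ : ℝ) : ℝ :=
  ∑ y, tiltedOutput W Q (1 / (1 + ρ)) y ^ (1 + ρ)

lemma fRho_eq (ρ : ℝ) (y : Y) :
    fRho W Q ρ y = tiltedOutput W Q (1 / (1 + ρ)) y ^ (1 + ρ) / gallagerSum W Q ρ :=
  rfl

lemma tiltedOutput_nonneg (hW : IsChannel W) (hQ : IsDist Q) (s : ℝ) (y : Y) :
    0 ≤ tiltedOutput W Q s y :=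
  Finset.sum_nonneg fun x _ => mul_nonneg (hQ.1 x) (rpow_nonneg (hW.1 x y) _)

lemma tiltedOutput_pos (hW : IsChannel W) (hQ : IsDist Q) (s : ℝ) {x : X} {y : Y}
    (hx : 0 < Q x) (hy : 0 < W x y) : 0 < tiltedOutput W Q s y :=
  (mul_pos hx (rpow_pos_of_pos hy _)).trans_le <|
    Finset.single_le_sum (f := fun x => Q x * W x y ^ s)
      (fun x _ => mul_nonneg (hQ.1 x) (rpow_nonneg (hW.1 x y) _)) (Finset.mem_univ x)

lemma gallagerSum_pos (hW : IsChannel W) (hQ : IsDist Q) (ρ : ℝ) : 0 < gallagerSum W Q ρ := by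
  obtain ⟨x, hx⟩ := hQ.exists_pos_s15
  obtain ⟨y, hy⟩ := (hW.isDist x).exists_pos_s15
  exact (rpow_pos_of_pos (tiltedOutput_pos hW hQ _ hx hy) _).trans_le <|
    Finset.single_le_sum (f := fun y => tiltedOutput W Q (1 / (1 + ρ)) y ^ (1 + ρ))
      (fun y _ => rpow_nonneg (tiltedOutput_nonneg hW hQ _ y) _) (Finset.mem_univ y)

lemma fRho_pos (hW : IsChannel W) (hQ : IsDist Q) (ρ : ℝ) {x : X} {y : Y}
    (hx : 0 < Q x) (hy : 0 < W x y) : 0 < fRho W Q ρ y :=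
  div_pos (rpow_pos_of_pos (tiltedOutput_pos hW hQ _ hx hy) _) (gallagerSum_pos hW hQ ρ)

lemma continuousOn_Eo (hW : IsChannel W) (hQ : IsDist Q) :
    ContinuousOn (fun ρ => Eo W ρ Q) (Set.Ioi (-1)) := by
  have hpos : ∀ ρ ∈ Set.Ioi (-1 : ℝ), 0 < 1 + ρ := fun ρ hρ => by
    rw [Set.mem_Ioi] at hρ; linarith
  refine ContinuousOn.neg (ContinuousOn.log ?_ fun ρ _ => (gallagerSum_pos hW hQ ρ).ne')
  refine continuousOn_finsetSum _ fun y _ => ContinuousOn.rpow ?_ (by fun_prop)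
    fun ρ hρ => Or.inr (hpos ρ hρ)
  refine continuousOn_finsetSum _ fun x _ => ContinuousOn.mul continuousOn_const ?_
  exact ContinuousOn.rpow continuousOn_const
    (continuousOn_const.div (by fun_prop) fun ρ hρ => (hpos ρ hρ).ne')
    fun ρ hρ => Or.inr (one_div_pos.2 (hpos ρ hρ))

lemma antitone_ErQ (hW : IsChannel W) (hQ : IsDist Q) : Antitone fun R => ErQ W R Q := by
  intro a b hab
  have hEo : ContinuousOn (fun ρ => Eo W ρ Q) (Set.Icc 0 1) :=
    (continuousOn_Eo hW hQ).mono fun ρ hρ => by rw [Set.mem_Ioi]; linarith [hρ.1]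
  have hbdd : BddAbove ((fun ρ => -ρ * a + Eo W ρ Q) '' Set.Icc 0 1) :=
    isCompact_Icc.bddAbove_image (by fun_prop)
  refine csSup_le ((Set.nonempty_Icc.2 zero_le_one).image _) ?_
  rintro _ ⟨ρ, hρ, rfl⟩
  exact le_csSup_of_le hbdd ⟨ρ, hρ, rfl⟩ (by nlinarith [hρ.1])

lemma PStilde_pos (hW : IsChannel W) (hQ : IsDist Q) : 0 < PStilde W Q := by
  obtain ⟨x, hx⟩ := hQ.exists_pos_s15
  obtain ⟨y, hy⟩ := (hW.isDist x).exists_pos_s15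
  have hnonneg : ∀ x y z,
      0 ≤ if 0 < Q x * W x y * (Q z * W z y) then Q x * W x y * Q z else 0 := fun x y z =>
    ite_nonneg (mul_nonneg (mul_nonneg (hQ.1 x) (hW.1 x y)) (hQ.1 z)) le_rfl
  refine Finset.sum_pos' (fun x _ => Finset.sum_nonneg fun y _ => Finset.sum_nonneg
    fun z _ => hnonneg x y z) ⟨x, Finset.mem_univ x, ?_⟩
  refine Finset.sum_pos' (fun y _ => Finset.sum_nonneg fun z _ => hnonneg x y z)
    ⟨y, Finset.mem_univ y, ?_⟩
  refine Finset.sum_pos' (fun z _ => hnonneg x y z) ⟨x, Finset.mem_univ x, ?_⟩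
  have hxy : 0 < Q x * W x y := mul_pos hx hy
  rw [if_pos (mul_pos hxy hxy)]
  exact mul_pos hxy hx

lemma Lam_eq_mul_log_gallagerSum (hW : IsChannel W) (hQ : IsDist Q) {ρ : ℝ} (hρ : -1 < ρ) :
    Lam W Q ρ (ρ / (1 + ρ)) = 1 / (1 + ρ) * log (gallagerSum W Q ρ) := by
  have h1ρ : 0 < 1 + ρ := by linarith
  set s := 1 / (1 + ρ) with hs
  set g := tiltedOutput W Q s
  set G := gallagerSum W Q ρ
  have hG : 0 < G := gallagerSum_pos hW hQ ρ
  have hs0 : s ≠ 0 := (one_div_pos.2 h1ρ).ne'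
  have ht : ρ / (1 + ρ) = 1 - s := by rw [hs]; field_simp; ring
  have hsummand : ∀ x y, Q x * W x y * exp (ρ / (1 + ρ) * log (fRho W Q ρ y / W x y)) =
      Q x * W x y ^ s * fRho W Q ρ y ^ (1 - s) := by
    intro x y
    rcases (hQ.1 x).eq_or_lt with hx | hx
    · simp [← hx]
    rcases (hW.1 x y).eq_or_lt with hy | hy
    · simp [← hy, zero_rpow hs0]
    rw [mul_assoc, mul_exp_mul_log_div hy (fRho_pos hW hQ ρ hx hy), ht, sub_sub_cancel]
    ring
  have hfiber : ∀ y, g y * fRho W Q ρ y ^ (1 - s) = g y ^ (1 + ρ) / G ^ (1 - s) := by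
    intro y
    have hg : 0 ≤ g y := tiltedOutput_nonneg hW hQ s y
    rw [fRho_eq, div_rpow (rpow_nonneg hg _) hG.le, ← rpow_mul hg,
      show (1 + ρ) * (1 - s) = ρ by rw [hs]; field_simp; ring, ← mul_div_assoc,
      rpow_add' hg (by linarith), rpow_one]
  calc Lam W Q ρ (ρ / (1 + ρ)) = log (∑ y, g y * fRho W Q ρ y ^ (1 - s)) := by
        rw [Lam, Finset.sum_comm]
        simp_rw [hsummand, ← Finset.sum_mul]
        rfl
    _ = log (G ^ s) := by
        simp_rw [hfiber]
        rw [← Finset.sum_div, show ∑ y, g y ^ (1 + ρ) = G from rfl, rpow_sub hG, rpow_one,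
          div_div_cancel₀ hG.ne']
    _ = s * log G := log_rpow hG s

lemma Lam1_eq_mul_log_gallagerSum_sub_log_PStilde (hW : IsChannel W) (hQ : IsDist Q) {ρ : ℝ}
    (hρ : -1 < ρ) :
    Lam1 W Q ρ ((1 - ρ) / (1 + ρ), 1 / (1 + ρ)) =
      2 / (1 + ρ) * log (gallagerSum W Q ρ) - log (PStilde W Q) := by
  have h1ρ : 0 < 1 + ρ := by linarith
  set s := 1 / (1 + ρ) with hs
  set u := (1 - ρ) / (1 + ρ) with hu
  set g := tiltedOutput W Q s
  set G := gallagerSum W Q ρ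
  have hG : 0 < G := gallagerSum_pos hW hQ ρ
  have hs0 : s ≠ 0 := (one_div_pos.2 h1ρ).ne'
  have hus : 1 + u = 2 * s := by rw [hu, hs]; field_simp; ring
  have hsummand : ∀ x y z,
      (if 0 < Q x * W x y * (Q z * W z y) then
        Q x * W x y * Q z * exp (u * log (W x y / fRho W Q ρ y) + s * log (W z y / W x y))
      else 0) = Q x * W x y ^ s * (Q z * W z y ^ s) / fRho W Q ρ y ^ u := by
    intro x y z
    rcases (hQ.1 x).eq_or_lt with hx | hx
    · simp [← hx]
    rcases (hW.1 x y).eq_or_lt with hxy | hxy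
    · simp [← hxy, zero_rpow hs0]
    rcases (hQ.1 z).eq_or_lt with hz | hz
    · simp [← hz]
    rcases (hW.1 z y).eq_or_lt with hzy | hzy
    · simp [← hzy, zero_rpow hs0]
    rw [if_pos (by positivity), mul_right_comm, mul_assoc (Q x),
      mul_exp_add_mul_log_div hxy hzy (fRho_pos hW hQ ρ hx hxy),
      show 1 + u - s = s by linarith]
    ring
  have hfiber : ∀ y, g y * g y / fRho W Q ρ y ^ u = g y ^ (1 + ρ) * G ^ u := by
    intro y
    have hg : 0 ≤ g y := tiltedOutput_nonneg hW hQ s y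
    rw [fRho_eq, div_rpow (rpow_nonneg hg _) hG.le, ← rpow_mul hg,
      show (1 + ρ) * u = 1 - ρ by rw [hu]; field_simp]
    rcases hg.eq_or_lt with h0 | hpos
    · simp [← h0, zero_rpow h1ρ.ne']
    have hsq : g y ^ (1 + ρ) * g y ^ (1 - ρ) = g y * g y := by
      rw [← rpow_add hpos, show 1 + ρ + (1 - ρ) = (2 : ℝ) by ring, rpow_two, sq]
    rw [← hsq]
    field_simp
  calc Lam1 W Q ρ (u, s) = log ((∑ y, g y * g y / fRho W Q ρ y ^ u) / PStilde W Q) := by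
        simp only [Lam1, hsummand]
        rw [Finset.sum_comm]
        congr 2
        refine Finset.sum_congr rfl fun y _ => ?_
        rw [show g y = ∑ x, Q x * W x y ^ s from rfl, Finset.sum_mul_sum, Finset.sum_div]
        simp_rw [Finset.sum_div]
    _ = log (G ^ (2 * s) / PStilde W Q) := by
        simp_rw [hfiber]
        rw [← Finset.sum_mul, show ∑ y, g y ^ (1 + ρ) = G from rfl,
          ← rpow_one_add' hG.le (hus ▸ mul_ne_zero two_ne_zero hs0), hus]
    _ = 2 / (1 + ρ) * log G - log (PStilde W Q) := by
        rw [log_div (rpow_pos_of_pos hG _).ne' (PStilde_pos hW hQ).ne', log_rpow hG, hs]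
        ring

end Tilting

theorem statement15_general {X Y : Type*} [Fintype X] [Fintype Y]
    (W : X → Y → ℝ) (hW : IsChannel W)
    (Q : X → ℝ) (hQ : IsDist Q)
    (r : ℝ)
    (ρ : ℝ) (hρ : ρ = - deriv (fun a => ErQ W a Q) r) :
    Lam1 W Q ρ ((1 - ρ) / (1 + ρ), 1 / (1 + ρ)) =
      - Real.log (PStilde W Q) + 2 * Lam W Q ρ (ρ / (1 + ρ)) := by
  have hρ0 : 0 ≤ ρ := hρ ▸ neg_nonneg.2 (antitone_ErQ hW hQ).deriv_nonpos
  rw [Lam1_eq_mul_log_gallagerSum_sub_log_PStilde hW hQ (by linarith),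
    Lam_eq_mul_log_gallagerSum hW hQ (by linarith)]
  ring

/-- `Λ_{1,ρ}(ṽ) = -log P_{X,Y,Z}(S̃_Q) + 2 Λ_ρ(ρ/(1+ρ))` at
`ṽ = ((1-ρ)/(1+ρ), 1/(1+ρ))`. -/
theorem statement15 {X Y : Type*} [Fintype X] [Fintype Y] [Nonempty X] [Nonempty Y]
    (W : X → Y → ℝ) (hW : IsChannel W) (hcr : Rcr W < Capacity W)
    (Q : X → ℝ) (hQ : IsDist Q)
    (hEr : ∃ R : ℝ, Rinf W < R ∧ 0 < ErQ W R Q)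
    (r : ℝ) (hr1 : RcrQ W Q < r) (hr2 : r < MI W Q)
    (ρ : ℝ) (hρ : ρ = - deriv (fun a => ErQ W a Q) r) :
    Lam1 W Q ρ ((1 - ρ) / (1 + ρ), 1 / (1 + ρ)) =
      - Real.log (PStilde W Q) + 2 * Lam W Q ρ (ρ / (1 + ρ)) :=
  statement15_general W hW Q hQ r ρ hρ

end RCB
end
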